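/- Let 0 < λ ≤ Λ, Q = 2d+2, β = Λ(Q−1)/λ + 1, c_1 > 0, c_2 ∈ R, and define z(x) = c_1 log(1+ρ(x))/ρ(x)^{β−2} + c_2 on the Heisenberg group with gauge norm ρ. Then for all x with ρ(x) ≥ R_1 := exp((2β−3)/((β−2)(β−1))) − 1, one has M^-_{λ,Λ}(D^2_{H^d}z(x)) ≥ −λ c_1 (β−2) |D_{H^d}ρ|^2 / ρ(x)^β. -/

import Mathlib

open Matrix MeasureTheory Real Set

noncomputable def pucciPlus (l L : ℝ) {n : ℕ} {M : Matrix (Fin n) (Fin n) ℝ}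
    (hM : M.IsHermitian) : ℝ :=
  ∑ i, (L * max (hM.eigenvalues i) 0 + l * min (hM.eigenvalues i) 0)

noncomputable def pucciMinus (l L : ℝ) {n : ℕ} {M : Matrix (Fin n) (Fin n) ℝ}
    (hM : M.IsHermitian) : ℝ :=
  ∑ i, (l * max (hM.eigenvalues i) 0 + L * min (hM.eigenvalues i) 0)

noncomputable def heisVF (d : ℕ) (i : Fin (2*d)) (x : Fin (2*d+1) → ℝ) : Fin (2*d+1) → ℝ :=
  if _h : (i : ℕ) < d then
    (Pi.single (Fin.castSucc i) 1 : Fin (2*d+1) → ℝ)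
      + (2 * x ⟨(i:ℕ) + d, by omega⟩) • (Pi.single (Fin.last (2*d)) 1 : Fin (2*d+1) → ℝ)
  else
    (Pi.single (Fin.castSucc i) 1 : Fin (2*d+1) → ℝ)
      - (2 * x ⟨(i:ℕ) - d, by omega⟩) • (Pi.single (Fin.last (2*d)) 1 : Fin (2*d+1) → ℝ)

noncomputable def hGrad (d : ℕ) (u : (Fin (2*d+1) → ℝ) → ℝ) (x : Fin (2*d+1) → ℝ) :
    Fin (2*d) → ℝ := fun i => fderiv ℝ u x (heisVF d i x)

noncomputable def hGradSq (d : ℕ) (u : (Fin (2*d+1) → ℝ) → ℝ) (x : Fin (2*d+1) → ℝ) : ℝ :=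
  ∑ i : Fin (2*d), (hGrad d u x i) ^ 2

noncomputable def hHess (d : ℕ) (u : (Fin (2*d+1) → ℝ) → ℝ) (x : Fin (2*d+1) → ℝ) :
    Matrix (Fin (2*d)) (Fin (2*d)) ℝ :=
  Matrix.of fun i j =>
    (fderiv ℝ (fun y => hGrad d u y j) x (heisVF d i x)
      + fderiv ℝ (fun y => hGrad d u y i) x (heisVF d j x)) / 2

lemma hHess_herm (d : ℕ) (u : (Fin (2*d+1) → ℝ) → ℝ) (x : Fin (2*d+1) → ℝ) :
    (hHess d u x).IsHermitian := by
  unfold Matrix.IsHermitian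
  ext i j
  simp [hHess, Matrix.conjTranspose_apply, add_comm]

/-- The Koranyi gauge norm on the Heisenberg group `ℍ^d ≃ ℝ^{2d+1}`. -/
noncomputable def hGauge (d : ℕ) (x : Fin (2*d+1) → ℝ) : ℝ :=
  ((∑ i : Fin (2*d), x (Fin.castSucc i) ^ 2) ^ 2 + x (Fin.last (2*d)) ^ 2) ^ (1/4 : ℝ)

/-!
For a radial function `z = φ ∘ ρ` the chain rule gives `D²z = φ''(ρ) Dρ ⊗ Dρ + φ'(ρ) D²ρ`, and
the horizontal Hessian `D²ρ` of the gauge is positive semidefinite with trace `(Q - 1)|Dρ|²/ρ`.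
Beyond `R₁` the profile `φ(r) = c₁ log(1 + r)/r^(β-2)` satisfies `φ'' ≥ 0 ≥ φ'`, so
`D²z = A - B` with `A = φ'' Dρ ⊗ Dρ` and `B = -φ' D²ρ` positive semidefinite, whence
`M⁻(D²z) ≥ λ tr A - Λ tr B = λ |Dρ|² (φ'' + (β - 1) φ'/ρ)` by the choice of `β`. With
`τ = ρ/(1 + ρ) ∈ [0, 1)` one computes `φ'' + (β - 1) φ'/ρ = c₁ ρ^(-β) ((3 - β) τ - τ²)`, and this is
at least `-c₁ (β - 2) ρ^(-β)` because `β - 2 + (3 - β) τ - τ² = (1 - τ)(β - 2 + τ)`.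
-/

open Filter Topology

lemma hasDerivAt_log_one_add {r : ℝ} (hr : 0 < 1 + r) :
    HasDerivAt (fun s => log (1 + s)) (1 / (1 + r)) r := by
  simpa using ((hasDerivAt_id r).const_add 1).log hr.ne'

lemma hasDerivAt_rpow_const_of_pos {r : ℝ} (p : ℝ) (hr : 0 < r) :
    HasDerivAt (fun s => s ^ p) (p * (r ^ p / r)) r := by
  simpa [rpow_sub_one hr.ne'] using hasDerivAt_rpow_const (p := p) (Or.inl hr.ne')

lemma mul_sub_mul_le_mul_max_add_mul_min {l L μ a b : ℝ} (hlL : l ≤ L) (ha : 0 ≤ a)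
    (hb : 0 ≤ b) (hμ : μ = a - b) : l * a - L * b ≤ l * max μ 0 + L * min μ 0 := by
  subst hμ
  rcases le_total 0 (a - b) with h | h
  · rw [max_eq_left h, min_eq_right h]; nlinarith
  · rw [max_eq_right h, min_eq_left h]; nlinarith

theorem le_pucciMinus_of_eq_sub {n : ℕ} {l L : ℝ} (hlL : l ≤ L)
    {M A B : Matrix (Fin n) (Fin n) ℝ} (hM : M.IsHermitian) (hA : A.PosSemidef)
    (hB : B.PosSemidef) (hMAB : M = A - B) :
    l * A.trace - L * B.trace ≤ pucciMinus l L hM := by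
  -- in an eigenbasis of `M` its eigenvalues are `aᵢ - bᵢ`, where `aᵢ, bᵢ ≥ 0` are the diagonal
  -- entries of `A` and `B` in that basis
  subst hMAB
  set U : Matrix (Fin n) (Fin n) ℝ := (hM.eigenvectorUnitary : Matrix (Fin n) (Fin n) ℝ)
  have hdiag : star U * (A - B) * U = diagonal hM.eigenvalues := by
    simpa [U, Function.comp_def] using hM.conjStarAlgAut_star_eigenvectorUnitary
  have trace_conj (X : Matrix (Fin n) (Fin n) ℝ) : (star U * X * U).trace = X.trace := by
    rw [trace_mul_cycle, show U * star U = 1 from Unitary.coe_mul_star_self _, one_mul]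
  rw [← trace_conj A, ← trace_conj B, trace, trace, Finset.mul_sum, Finset.mul_sum,
    ← Finset.sum_sub_distrib]
  refine Finset.sum_le_sum fun i _ => mul_sub_mul_le_mul_max_add_mul_min hlL
    (hA.conjTranspose_mul_mul_same U).diag_nonneg (hB.conjTranspose_mul_mul_same U).diag_nonneg ?_
  have := congrFun (congrFun hdiag i) i
  simp only [Matrix.mul_sub, Matrix.sub_mul, Matrix.sub_apply, diagonal_apply_eq] at this
  simpa [star_eq_conjTranspose] using this.symm

lemma posSemidef_dotProduct_self_smul_one_sub_vecMulVec {n : Type*} [Fintype n]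
    [DecidableEq n] (a : n → ℝ) : ((a ⬝ᵥ a) • (1 : Matrix n n ℝ) - vecMulVec a a).PosSemidef := by
  refine PosSemidef.of_dotProduct_mulVec_nonneg (by simp [IsHermitian]) fun g => ?_
  have hcs := Finset.sum_mul_sq_le_sq_mul_sq Finset.univ a g
  simp only [star_trivial, sub_mulVec, smul_mulVec, one_mulVec, vecMulVec_mulVec,
    dotProduct_sub, dotProduct_smul, smul_eq_mul, MulOpposite.smul_eq_mul_unop,
    MulOpposite.unop_op]
  rw [dotProduct_comm g a]
  simp only [dotProduct, ← sq] at hcs ⊢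
  linarith

section HorizontalCalculus
variable {d : ℕ} {u v : (Fin (2*d+1) → ℝ) → ℝ} {x : Fin (2*d+1) → ℝ}

lemma Filter.EventuallyEq.hGrad_eq (h : u =ᶠ[𝓝 x] v) : hGrad d u x = hGrad d v x := by
  ext i; simp [hGrad, h.fderiv_eq]

lemma hGrad_apply (k : Fin (2*d+1)) (i : Fin (2*d)) :
    hGrad d (fun y => y k) x i = heisVF d i x k := by
  simp [hGrad, fderiv_apply]

lemma hGrad_add (hu : DifferentiableAt ℝ u x) (hv : DifferentiableAt ℝ v x) (i : Fin (2*d)) :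
    hGrad d (fun y => u y + v y) x i = hGrad d u x i + hGrad d v x i := by
  simp [hGrad, fderiv_fun_add hu hv]

lemma hGrad_sum {ι : Type*} {s : Finset ι} {f : ι → (Fin (2*d+1) → ℝ) → ℝ}
    (hf : ∀ k ∈ s, DifferentiableAt ℝ (f k) x) (i : Fin (2*d)) :
    hGrad d (fun y => ∑ k ∈ s, f k y) x i = ∑ k ∈ s, hGrad d (f k) x i := by
  simp [hGrad, fderiv_fun_sum hf]

lemma hGrad_mul (hu : DifferentiableAt ℝ u x) (hv : DifferentiableAt ℝ v x) (i : Fin (2*d)) :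
    hGrad d (fun y => u y * v y) x i = u x * hGrad d v x i + v x * hGrad d u x i := by
  simp [hGrad, fderiv_fun_mul hu hv]

lemma hGrad_comp {φ : ℝ → ℝ} {φ' : ℝ} (hφ : HasDerivAt φ φ' (u x))
    (hu : DifferentiableAt ℝ u x) (i : Fin (2*d)) :
    hGrad d (fun y => φ (u y)) x i = φ' * hGrad d u x i := by
  have h : HasFDerivAt (fun y => φ (u y)) (φ' • fderiv ℝ u x) x :=
    hφ.comp_hasFDerivAt x hu.hasFDerivAt
  simp [hGrad, h.fderiv]

lemma hGrad_const_mul (c : ℝ) (hu : DifferentiableAt ℝ u x) (i : Fin (2*d)) :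
    hGrad d (fun y => c * u y) x i = c * hGrad d u x i :=
  hGrad_comp (φ := fun r => c * r) ((hasDerivAt_id _).const_mul c |>.congr_deriv (mul_one c)) hu i

lemma hGrad_pow (hu : DifferentiableAt ℝ u x) (n : ℕ) (i : Fin (2*d)) :
    hGrad d (fun y => u y ^ n) x i = n * u x ^ (n - 1) * hGrad d u x i :=
  hGrad_comp (φ := fun r => r ^ n) (hasDerivAt_pow n _) hu i

lemma hGrad_div (hu : DifferentiableAt ℝ u x) (hv : DifferentiableAt ℝ v x) (hv0 : v x ≠ 0)
    (i : Fin (2*d)) :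
    hGrad d (fun y => u y / v y) x i
      = (hGrad d u x i * v x - u x * hGrad d v x i) / v x ^ 2 := by
  simp only [div_eq_mul_inv]
  rw [hGrad_mul (v := fun y => (v y)⁻¹) hu (hv.inv hv0),
    hGrad_comp (φ := fun r => r⁻¹) (hasDerivAt_inv hv0) hv]
  field_simp
  ring

lemma hHess_apply (u : (Fin (2*d+1) → ℝ) → ℝ) (x : Fin (2*d+1) → ℝ) (i j : Fin (2*d)) :
    hHess d u x i j
      = (hGrad d (fun y => hGrad d u y j) x i + hGrad d (fun y => hGrad d u y i) x j) / 2 :=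
  rfl

theorem hHess_comp {φ φ' : ℝ → ℝ} {φ'' : ℝ} (hφ : ∀ᶠ y in 𝓝 x, HasDerivAt φ (φ' (u y)) (u y))
    (hφ' : HasDerivAt φ' φ'' (u x)) (hu : ∀ᶠ y in 𝓝 x, DifferentiableAt ℝ u y)
    (hgrad : ∀ j, DifferentiableAt ℝ (fun y => hGrad d u y j) x) :
    hHess d (fun y => φ (u y)) x
      = φ'' • vecMulVec (hGrad d u x) (hGrad d u x) + φ' (u x) • hHess d u x := by
  have hux := hu.self_of_nhds
  have hsecond (i j : Fin (2*d)) : hGrad d (fun y => hGrad d (fun y => φ (u y)) y j) x i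
      = φ' (u x) * hGrad d (fun y => hGrad d u y j) x i
        + hGrad d u x j * (φ'' * hGrad d u x i) := by
    have hfirst : (fun y => hGrad d (fun y => φ (u y)) y j) =ᶠ[𝓝 x]
        fun y => φ' (u y) * hGrad d u y j :=
      (hφ.and hu).mono fun y hy => hGrad_comp hy.1 hy.2 j
    rw [hfirst.hGrad_eq, hGrad_mul (u := fun y => φ' (u y)) (hφ'.differentiableAt.comp x hux)
      (hgrad j), hGrad_comp hφ' hux]
  ext i j
  simp only [hHess_apply, hsecond, Matrix.add_apply, Matrix.smul_apply, vecMulVec_apply,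
    smul_eq_mul]
  ring

end HorizontalCalculus

def heisPartner (d : ℕ) (i : Fin (2*d)) : Fin (2*d) :=
  if _h : (i : ℕ) < d then ⟨i + d, by omega⟩ else ⟨i - d, by omega⟩

noncomputable def heisSign (d : ℕ) (i : Fin (2*d)) : ℝ := if (i : ℕ) < d then 1 else -1

/-- The horizontal part `y_h` of `y` rotated by the standard complex structure `J`, so that
`heisVF d i y = ∂ᵢ + 2 (J y_h)ᵢ ∂ₜ`. -/
noncomputable def heisJ (d : ℕ) (y : Fin (2*d+1) → ℝ) (i : Fin (2*d)) : ℝ :=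
  heisSign d i * y (heisPartner d i).castSucc

noncomputable def horizNormSq (d : ℕ) (y : Fin (2*d+1) → ℝ) : ℝ :=
  ∑ i : Fin (2*d), y (Fin.castSucc i) ^ 2

section ComplexStructure
variable {d : ℕ}

lemma heisPartner_involutive : Function.Involutive (heisPartner d) := by
  intro i
  have := i.isLt
  unfold heisPartner
  by_cases h : (i : ℕ) < d
  · rw [dif_pos h, dif_neg (by simp)]; ext; simp
  · rw [dif_neg h, dif_pos (by simp; omega)]; ext; simp; omega

lemma heisSign_heisPartner (i : Fin (2*d)) : heisSign d (heisPartner d i) = -heisSign d i := by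
  have := i.isLt
  unfold heisSign heisPartner
  split_ifs with h1 h2 h2 <;> simp only at h2 <;> first | omega | norm_num

lemma heisSign_sq (i : Fin (2*d)) : heisSign d i ^ 2 = 1 := by
  unfold heisSign; split_ifs <;> norm_num

lemma heisVF_castSucc (i j : Fin (2*d)) (y : Fin (2*d+1) → ℝ) :
    heisVF d i y j.castSucc = if j = i then 1 else 0 := by
  have hne : j.castSucc ≠ Fin.last (2*d) := (Fin.castSucc_lt_last j).ne
  unfold heisVF
  split_ifs <;> simp_all [Fin.castSucc_inj]

lemma heisVF_last (i : Fin (2*d)) (y : Fin (2*d+1) → ℝ) :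
    heisVF d i y (Fin.last (2*d)) = 2 * heisJ d y i := by
  have hne : Fin.last (2*d) ≠ i.castSucc := (Fin.castSucc_lt_last i).ne'
  unfold heisVF heisJ heisSign heisPartner
  split_ifs <;> simp [hne]

lemma sum_heisJ_sq (y : Fin (2*d+1) → ℝ) : ∑ i, heisJ d y i ^ 2 = horizNormSq d y := by
  simp only [heisJ, mul_pow, heisSign_sq, one_mul]
  exact Equiv.sum_comp (heisPartner_involutive.toPerm _) (fun i => y (Fin.castSucc i) ^ 2)

lemma sum_mul_heisJ (y : Fin (2*d+1) → ℝ) : ∑ i, y i.castSucc * heisJ d y i = 0 := by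
  have hswap := Equiv.sum_comp (heisPartner_involutive.toPerm _)
    (fun i => y (Fin.castSucc i) * heisJ d y i)
  simp only [Function.Involutive.coe_toPerm, heisJ, heisSign_heisPartner,
    heisPartner_involutive _] at hswap ⊢
  have : ∑ i, y (heisPartner d i).castSucc * (-heisSign d i * y i.castSucc)
      = -∑ i, y i.castSucc * (heisSign d i * y (heisPartner d i).castSucc) := by
    rw [← Finset.sum_neg_distrib]; exact Finset.sum_congr rfl fun i _ => by ring
  linarith

lemma sum_mul_add_mul_heisJ_sq (a b : ℝ) (y : Fin (2*d+1) → ℝ) :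
    ∑ i, (a * y i.castSucc + b * heisJ d y i) ^ 2 = (a ^ 2 + b ^ 2) * horizNormSq d y := by
  have hexp (i : Fin (2*d)) : (a * y i.castSucc + b * heisJ d y i) ^ 2
      = a ^ 2 * y i.castSucc ^ 2 + 2 * a * b * (y i.castSucc * heisJ d y i)
        + b ^ 2 * heisJ d y i ^ 2 := by ring
  simp only [hexp, Finset.sum_add_distrib, ← Finset.mul_sum, sum_mul_heisJ, sum_heisJ_sq]
  unfold horizNormSq
  ring

variable {x : Fin (2*d+1) → ℝ}

lemma hGrad_last (i : Fin (2*d)) :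
    hGrad d (fun y => y (Fin.last (2*d))) x i = 2 * heisJ d x i := by
  rw [hGrad_apply, heisVF_last]

lemma hGrad_horizNormSq (i : Fin (2*d)) : hGrad d (horizNormSq d) x i = 2 * x i.castSucc := by
  unfold horizNormSq
  rw [hGrad_sum fun k _ => by fun_prop]
  simp [hGrad_pow (differentiableAt_apply _ x), hGrad_apply, heisVF_castSucc]

lemma hGrad_heisJ (i j : Fin (2*d)) :
    hGrad d (fun y => heisJ d y j) x i = heisSign d j * if heisPartner d j = i then 1 else 0 := by
  simp [heisJ, hGrad_const_mul _ (differentiableAt_apply _ x), hGrad_apply, heisVF_castSucc]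

lemma hGrad_heisJ_add_swap (i j : Fin (2*d)) :
    hGrad d (fun y => heisJ d y j) x i + hGrad d (fun y => heisJ d y i) x j = 0 := by
  simp only [hGrad_heisJ]
  by_cases h : heisPartner d j = i
  · subst h
    simp [heisPartner_involutive j, heisSign_heisPartner]
  · have h' : heisPartner d i ≠ j := fun h' => h (h' ▸ heisPartner_involutive i)
    simp [h, h']

end ComplexStructure

noncomputable def gaugeQuartic (d : ℕ) (y : Fin (2*d+1) → ℝ) : ℝ :=
  horizNormSq d y ^ 2 + y (Fin.last (2*d)) ^ 2

noncomputable def gaugeGradVec (d : ℕ) (y : Fin (2*d+1) → ℝ) (i : Fin (2*d)) : ℝ :=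
  horizNormSq d y * y i.castSucc + y (Fin.last (2*d)) * heisJ d y i

/-- With `v = gaugeGradVec d y` and `w = gaugeGradVecOrth d y` one has
`v ⊗ v + w ⊗ w = ρ⁴ (y_h ⊗ y_h + J y_h ⊗ J y_h)`, which exhibits the horizontal Hessian of the
gauge as positive semidefinite (`hHess_hGauge`). -/
noncomputable def gaugeGradVecOrth (d : ℕ) (y : Fin (2*d+1) → ℝ) (i : Fin (2*d)) : ℝ :=
  y (Fin.last (2*d)) * y i.castSucc - horizNormSq d y * heisJ d y i

section Gauge
variable {d : ℕ} {x : Fin (2*d+1) → ℝ}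

lemma hGauge_eq_rpow (y : Fin (2*d+1) → ℝ) : hGauge d y = gaugeQuartic d y ^ (1/4 : ℝ) := rfl

lemma hGauge_pow_four (y : Fin (2*d+1) → ℝ) : hGauge d y ^ 4 = gaugeQuartic d y := by
  rw [hGauge_eq_rpow, ← rpow_natCast, ← rpow_mul (by unfold gaugeQuartic; positivity)]
  norm_num

lemma hGauge_pos (hx : 0 < gaugeQuartic d x) : 0 < hGauge d x := rpow_pos_of_pos hx _

lemma differentiable_gaugeQuartic : Differentiable ℝ (gaugeQuartic d) := by
  unfold gaugeQuartic horizNormSq; fun_prop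

lemma eventually_gaugeQuartic_pos (hx : 0 < gaugeQuartic d x) :
    ∀ᶠ y in 𝓝 x, 0 < gaugeQuartic d y :=
  continuousAt_const.eventually_lt differentiable_gaugeQuartic.continuous.continuousAt hx

lemma differentiableAt_hGauge (hx : 0 < gaugeQuartic d x) : DifferentiableAt ℝ (hGauge d) x :=
  (hasDerivAt_rpow_const_of_pos _ hx).differentiableAt.comp x (differentiable_gaugeQuartic x)

lemma hGrad_gaugeQuartic (i : Fin (2*d)) :
    hGrad d (gaugeQuartic d) x i = 4 * gaugeGradVec d x i := by
  have hs : DifferentiableAt ℝ (horizNormSq d) x := by unfold horizNormSq; fun_prop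
  unfold gaugeQuartic
  rw [hGrad_add (by fun_prop) (by fun_prop), hGrad_pow hs, hGrad_pow (differentiableAt_apply _ x),
    hGrad_horizNormSq, hGrad_last, gaugeGradVec]
  push_cast
  ring

lemma hGrad_hGauge (hx : 0 < gaugeQuartic d x) (i : Fin (2*d)) :
    hGrad d (hGauge d) x i = gaugeGradVec d x i / hGauge d x ^ 3 := by
  have hρ := hGauge_pos hx
  change hGrad d (fun y => gaugeQuartic d y ^ (1/4 : ℝ)) x i = _
  rw [hGrad_comp (hasDerivAt_rpow_const_of_pos _ hx) (differentiable_gaugeQuartic x),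
    hGrad_gaugeQuartic, ← hGauge_eq_rpow, ← hGauge_pow_four]
  field_simp

lemma hGradSq_hGauge (hx : 0 < gaugeQuartic d x) :
    hGradSq d (hGauge d) x = gaugeGradVec d x ⬝ᵥ gaugeGradVec d x / hGauge d x ^ 6 := by
  simp only [hGradSq, hGrad_hGauge hx, dotProduct, Finset.sum_div]
  exact Finset.sum_congr rfl fun i _ => by ring

lemma differentiableAt_hGrad_hGauge (hx : 0 < gaugeQuartic d x) (j : Fin (2*d)) :
    DifferentiableAt ℝ (fun y => hGrad d (hGauge d) y j) x := by
  have hv : DifferentiableAt ℝ (fun y => gaugeGradVec d y j) x := by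
    unfold gaugeGradVec heisJ horizNormSq; fun_prop
  have hρ3 : DifferentiableAt ℝ (fun y => hGauge d y ^ 3) x :=
    (differentiableAt_hGauge hx).fun_pow 3
  refine (hv.mul (hρ3.inv (pow_pos (hGauge_pos hx) 3).ne')).congr_of_eventuallyEq ?_
  exact (eventually_gaugeQuartic_pos hx).mono fun y hy => by
    simp only [Pi.mul_apply, Pi.inv_apply]; rw [hGrad_hGauge hy j, div_eq_mul_inv]

lemma hGrad_gaugeGradVec (i j : Fin (2*d)) :
    hGrad d (fun y => gaugeGradVec d y j) x i
      = 2 * x i.castSucc * x j.castSucc + horizNormSq d x * (if j = i then 1 else 0)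
        + 2 * heisJ d x i * heisJ d x j
        + x (Fin.last (2*d)) * hGrad d (fun y => heisJ d y j) x i := by
  have hs : DifferentiableAt ℝ (horizNormSq d) x := by unfold horizNormSq; fun_prop
  have hJ : DifferentiableAt ℝ (fun y => heisJ d y j) x := by unfold heisJ; fun_prop
  unfold gaugeGradVec
  rw [hGrad_add (by fun_prop) (by fun_prop), hGrad_mul hs (differentiableAt_apply _ x),
    hGrad_mul (differentiableAt_apply _ x) hJ, hGrad_horizNormSq, hGrad_last, hGrad_apply,
    heisVF_castSucc]
  ring

lemma hGrad_hGrad_hGauge (hx : 0 < gaugeQuartic d x) (i j : Fin (2*d)) :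
    hGrad d (fun y => hGrad d (hGauge d) y j) x i
      = hGrad d (fun y => gaugeGradVec d y j) x i / hGauge d x ^ 3
        - 3 * gaugeGradVec d x i * gaugeGradVec d x j / hGauge d x ^ 7 := by
  have hρ := hGauge_pos hx
  have hv : DifferentiableAt ℝ (fun y => gaugeGradVec d y j) x := by
    unfold gaugeGradVec heisJ horizNormSq; fun_prop
  have hρ3 : DifferentiableAt ℝ (fun y => hGauge d y ^ 3) x :=
    (differentiableAt_hGauge hx).fun_pow 3
  have hev : (fun y => hGrad d (hGauge d) y j) =ᶠ[𝓝 x]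
      fun y => gaugeGradVec d y j / hGauge d y ^ 3 :=
    (eventually_gaugeQuartic_pos hx).mono fun y hy => hGrad_hGauge hy j
  rw [hev.hGrad_eq, hGrad_div hv hρ3 (by positivity), hGrad_pow (differentiableAt_hGauge hx),
    hGrad_hGauge hx]
  field_simp
  ring

lemma dotProduct_gaugeGradVec_self (y : Fin (2*d+1) → ℝ) :
    gaugeGradVec d y ⬝ᵥ gaugeGradVec d y = horizNormSq d y * gaugeQuartic d y := by
  simp only [dotProduct, ← sq, gaugeGradVec, sum_mul_add_mul_heisJ_sq, gaugeQuartic]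
  ring

lemma dotProduct_gaugeGradVecOrth_self (y : Fin (2*d+1) → ℝ) :
    gaugeGradVecOrth d y ⬝ᵥ gaugeGradVecOrth d y = horizNormSq d y * gaugeQuartic d y := by
  simp only [dotProduct, ← sq, gaugeGradVecOrth, sub_eq_add_neg, ← neg_mul,
    sum_mul_add_mul_heisJ_sq, gaugeQuartic]
  ring

theorem hHess_hGauge (hx : 0 < gaugeQuartic d x) :
    hHess d (hGauge d) x = (hGauge d x ^ 7)⁻¹ •
      ((2 : ℝ) • vecMulVec (gaugeGradVecOrth d x) (gaugeGradVecOrth d x)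
        + ((gaugeGradVec d x ⬝ᵥ gaugeGradVec d x) • 1
          - vecMulVec (gaugeGradVec d x) (gaugeGradVec d x))) := by
  have hρ := hGauge_pos hx
  have h7 : hGauge d x ^ 7 = hGauge d x ^ 3 * gaugeQuartic d x := by
    rw [← hGauge_pow_four]; ring
  ext i j
  have hskew := hGrad_heisJ_add_swap (x := x) i j
  rw [hHess_apply, hGrad_hGrad_hGauge hx, hGrad_hGrad_hGauge hx, hGrad_gaugeGradVec,
    hGrad_gaugeGradVec, dotProduct_gaugeGradVec_self, h7]
  simp only [Matrix.smul_apply, Matrix.add_apply, Matrix.sub_apply, vecMulVec_apply, one_apply,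
    smul_eq_mul, gaugeGradVec, gaugeGradVecOrth]
  rw [show (if j = i then (1 : ℝ) else 0) = if i = j then 1 else 0 by simp [eq_comm]]
  generalize (if i = j then (1 : ℝ) else 0) = δ
  field_simp
  unfold gaugeQuartic
  linear_combination x (Fin.last (2*d)) * (horizNormSq d x ^ 2 + x (Fin.last (2*d)) ^ 2) * hskew

theorem posSemidef_hHess_hGauge (hx : 0 < gaugeQuartic d x) :
    (hHess d (hGauge d) x).PosSemidef := by
  have hww := posSemidef_vecMulVec_self_star (gaugeGradVecOrth d x)
  rw [star_trivial] at hww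
  rw [hHess_hGauge hx]
  exact ((hww.smul zero_le_two).add (posSemidef_dotProduct_self_smul_one_sub_vecMulVec _)).smul
    (inv_nonneg.2 (pow_nonneg (hGauge_pos hx).le 7))

theorem trace_hHess_hGauge (hx : 0 < gaugeQuartic d x) :
    (hHess d (hGauge d) x).trace = (2 * d + 1) * hGradSq d (hGauge d) x / hGauge d x := by
  have hρ := hGauge_pos hx
  rw [hHess_hGauge hx, hGradSq_hGauge hx]
  simp only [trace_smul, trace_add, trace_sub, trace_one, trace_vecMulVec,
    dotProduct_gaugeGradVecOrth_self, dotProduct_gaugeGradVec_self, Fintype.card_fin, smul_eq_mul]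
  field_simp
  push_cast
  ring

theorem hHess_comp_hGauge {φ φ' φ'' : ℝ → ℝ} (hφ : ∀ r > 0, HasDerivAt φ (φ' r) r)
    (hφ' : ∀ r > 0, HasDerivAt φ' (φ'' r) r) (hx : 0 < gaugeQuartic d x) :
    hHess d (fun y => φ (hGauge d y)) x
      = φ'' (hGauge d x) • vecMulVec (hGrad d (hGauge d) x) (hGrad d (hGauge d) x)
        + φ' (hGauge d x) • hHess d (hGauge d) x := by
  have hpos := eventually_gaugeQuartic_pos hx
  exact hHess_comp (hpos.mono fun y hy => hφ _ (hGauge_pos hy)) (hφ' _ (hGauge_pos hx))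
    (hpos.mono fun y hy => differentiableAt_hGauge hy) (differentiableAt_hGrad_hGauge hx)

theorem le_pucciMinus_hHess_comp_hGauge {l L : ℝ} (hlL : l ≤ L) {φ φ' φ'' : ℝ → ℝ}
    (hφ : ∀ r > 0, HasDerivAt φ (φ' r) r) (hφ' : ∀ r > 0, HasDerivAt φ' (φ'' r) r)
    (hx : 0 < gaugeQuartic d x) (hφ'_nonpos : φ' (hGauge d x) ≤ 0)
    (hφ''_nonneg : 0 ≤ φ'' (hGauge d x)) :
    l * φ'' (hGauge d x) * hGradSq d (hGauge d) x
        + L * (2 * d + 1) * φ' (hGauge d x) * hGradSq d (hGauge d) x / hGauge d x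
      ≤ pucciMinus l L (hHess_herm d (fun y => φ (hGauge d y)) x) := by
  have hsub : hHess d (fun y => φ (hGauge d y)) x
      = φ'' (hGauge d x) • vecMulVec (hGrad d (hGauge d) x) (hGrad d (hGauge d) x)
        - (-φ' (hGauge d x)) • hHess d (hGauge d) x := by
    rw [hHess_comp_hGauge hφ hφ' hx, neg_smul, sub_neg_eq_add]
  have h := le_pucciMinus_of_eq_sub hlL (hHess_herm _ _ _)
    ((posSemidef_vecMulVec_self_star _).smul hφ''_nonneg)
    ((posSemidef_hHess_hGauge hx).smul (neg_nonneg.2 hφ'_nonpos)) hsub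
  simp only [trace_smul, trace_vecMulVec, star_trivial, dotProduct, trace_hHess_hGauge hx,
    smul_eq_mul] at h
  convert h using 1
  simp only [hGradSq, sq]
  ring

end Gauge

noncomputable def logBarrier (β c1 c2 r : ℝ) : ℝ := c1 * log (1 + r) / r ^ (β - 2) + c2

noncomputable def logBarrierDeriv (β c1 r : ℝ) : ℝ :=
  c1 * (r / (1 + r) - (β - 2) * log (1 + r)) / (r ^ (β - 2) * r)

noncomputable def logBarrierDeriv2 (β c1 r : ℝ) : ℝ :=
  c1 * ((β - 2) * (β - 1) * log (1 + r) - 2 * (β - 2) * (r / (1 + r)) - (r / (1 + r)) ^ 2)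
    / (r ^ (β - 2) * r ^ 2)

section LogBarrier
variable {β c1 r : ℝ}

lemma hasDerivAt_logBarrier (c2 : ℝ) (hr : 0 < r) :
    HasDerivAt (logBarrier β c1 c2) (logBarrierDeriv β c1 r) r := by
  have ha : 0 < r ^ (β - 2) := rpow_pos_of_pos hr _
  refine ((((hasDerivAt_log_one_add (by linarith)).const_mul c1).div
    (hasDerivAt_rpow_const_of_pos _ hr) ha.ne').add_const c2).congr_deriv ?_
  unfold logBarrierDeriv
  field_simp

lemma hasDerivAt_logBarrierDeriv (hr : 0 < r) :
    HasDerivAt (logBarrierDeriv β c1) (logBarrierDeriv2 β c1 r) r := by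
  have ha : 0 < r ^ (β - 2) := rpow_pos_of_pos hr _
  have hnum : HasDerivAt (fun s => c1 * (s / (1 + s) - (β - 2) * log (1 + s)))
      (c1 * ((1 * (1 + r) - r * 1) / (1 + r) ^ 2 - (β - 2) * (1 / (1 + r)))) r :=
    (((hasDerivAt_id r).div ((hasDerivAt_id r).const_add 1) (by positivity)).sub
      ((hasDerivAt_log_one_add (by linarith)).const_mul (β - 2))).const_mul c1
  refine (hnum.div ((hasDerivAt_rpow_const_of_pos _ hr).fun_mul (hasDerivAt_id' r))
    (by positivity)).congr_deriv ?_
  unfold logBarrierDeriv2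
  field_simp
  ring

lemma logBarrierDeriv_nonpos (hc1 : 0 ≤ c1) (hβ : 2 ≤ β) (hr : 0 < r)
    (hlog : 2 * β - 3 ≤ (β - 2) * (β - 1) * log (1 + r)) : logBarrierDeriv β c1 r ≤ 0 := by
  have hτ : r / (1 + r) ≤ 1 := (div_le_one (by positivity)).2 (by linarith)
  have : r / (1 + r) - (β - 2) * log (1 + r) ≤ 0 := by nlinarith
  unfold logBarrierDeriv
  exact div_nonpos_of_nonpos_of_nonneg (mul_nonpos_of_nonneg_of_nonpos hc1 this) (by positivity)

lemma logBarrierDeriv2_nonneg (hc1 : 0 ≤ c1) (hβ : 3 ≤ 2 * β) (hr : 0 < r)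
    (hlog : 2 * β - 3 ≤ (β - 2) * (β - 1) * log (1 + r)) : 0 ≤ logBarrierDeriv2 β c1 r := by
  have hτ : r / (1 + r) ≤ 1 := (div_le_one (by positivity)).2 (by linarith)
  have hτ0 : 0 ≤ r / (1 + r) := by positivity
  -- with `τ = r/(1 + r)`: `2β - 3 - 2(β - 2)τ - τ² = (1 - τ)(2β - 3 + τ)`
  have : 0 ≤ (β - 2) * (β - 1) * log (1 + r) - 2 * (β - 2) * (r / (1 + r))
      - (r / (1 + r)) ^ 2 := by
    nlinarith [mul_nonneg (sub_nonneg.2 hτ) (add_nonneg (sub_nonneg.2 hβ) hτ0)]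
  unfold logBarrierDeriv2
  positivity

lemma neg_div_rpow_le_logBarrierDeriv2_add (hc1 : 0 ≤ c1) (hβ : 2 ≤ β) (hr : 0 < r) :
    -(c1 * (β - 2) / r ^ β)
      ≤ logBarrierDeriv2 β c1 r + (β - 1) * logBarrierDeriv β c1 r / r := by
  have hτ : r / (1 + r) ≤ 1 := (div_le_one (by positivity)).2 (by linarith)
  have hτ0 : 0 ≤ r / (1 + r) := by positivity
  have ha : 0 < r ^ (β - 2) := rpow_pos_of_pos hr _
  have hrβ : r ^ β = r ^ (β - 2) * r ^ 2 := by
    rw [← rpow_natCast, ← rpow_add hr]; norm_num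
  have hsum : logBarrierDeriv2 β c1 r + (β - 1) * logBarrierDeriv β c1 r / r
      = c1 * ((3 - β) * (r / (1 + r)) - (r / (1 + r)) ^ 2) / (r ^ (β - 2) * r ^ 2) := by
    unfold logBarrierDeriv logBarrierDeriv2
    field_simp
    ring
  rw [hsum, hrβ, ← neg_div]
  gcongr
  nlinarith [mul_nonneg (sub_nonneg.2 hτ) (add_nonneg (sub_nonneg.2 hβ) hτ0)]

lemma pos_and_le_mul_log_one_add_of_exp_sub_one_le (hβ : 2 < β)
    (hr : exp ((2 * β - 3) / ((β - 2) * (β - 1))) - 1 ≤ r) :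
    0 < r ∧ 2 * β - 3 ≤ (β - 2) * (β - 1) * log (1 + r) := by
  have hK : 0 < (2 * β - 3) / ((β - 2) * (β - 1)) := by apply div_pos <;> nlinarith
  have hr0 : 0 < r := by linarith [add_one_lt_exp hK.ne']
  refine ⟨hr0, ?_⟩
  rw [← div_le_iff₀' (by nlinarith), le_log_iff_exp_le (by linarith)]
  linarith

end LogBarrier

/-- for `z(x) = c₁log(1+ρ)/ρ^{β−2} + c₂` with `β = Λ(Q−1)/λ+1`, at points with
`ρ(x) ≥ R₁ = exp((2β−3)/((β−2)(β−1))) − 1` one has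
`M⁻_{λ,Λ}(D²_{ℍ^d}z) ≥ −λc₁(β−2)|Dρ|²/ρ^β`. -/
theorem log_barrier_subsolution (d : ℕ) (hd : 1 ≤ d) (l L c1 c2 : ℝ)
    (hl : 0 < l) (hL : l ≤ L) (hc1 : 0 < c1)
    (β : ℝ) (hβ : β = L * (2*d+1) / l + 1)
    (x : Fin (2*d+1) → ℝ)
    (hx : Real.exp ((2*β - 3) / ((β-2)*(β-1))) - 1 ≤ hGauge d x) :
    -(l * c1 * (β-2) * hGradSq d (hGauge d) x / hGauge d x ^ β) ≤
      pucciMinus l L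
        (hHess_herm d
          (fun y => c1 * Real.log (1 + hGauge d y) / hGauge d y ^ (β-2) + c2) x) := by
  have hβ2 : 2 < β := by
    have : (1 : ℝ) ≤ d := by exact_mod_cast hd
    have : 1 < L * (2 * d + 1) / l := (one_lt_div hl).2 (by nlinarith)
    linarith
  have hLβ : L * (2 * d + 1) = l * (β - 1) := by rw [hβ]; field_simp; ring
  set ρ := hGauge d x
  obtain ⟨hρ, hlog⟩ := pos_and_le_mul_log_one_add_of_exp_sub_one_le hβ2 hx
  have hG : 0 ≤ hGradSq d (hGauge d) x := Finset.sum_nonneg fun i _ => sq_nonneg _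
  have hP := le_pucciMinus_hHess_comp_hGauge hL (fun r hr => hasDerivAt_logBarrier c2 hr)
    (fun r hr => hasDerivAt_logBarrierDeriv hr) (hGauge_pow_four x ▸ pow_pos hρ 4)
    (logBarrierDeriv_nonpos hc1.le hβ2.le hρ hlog)
    (logBarrierDeriv2_nonneg hc1.le (by linarith) hρ hlog)
  refine le_trans ?_ hP
  calc -(l * c1 * (β - 2) * hGradSq d (hGauge d) x / ρ ^ β)
      = l * hGradSq d (hGauge d) x * -(c1 * (β - 2) / ρ ^ β) := by ring
    _ ≤ l * hGradSq d (hGauge d) x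
          * (logBarrierDeriv2 β c1 ρ + (β - 1) * logBarrierDeriv β c1 ρ / ρ) :=
      mul_le_mul_of_nonneg_left (neg_div_rpow_le_logBarrierDeriv2_add hc1.le hβ2.le hρ)
        (mul_nonneg hl.le hG)
    _ = _ := by
      linear_combination -(logBarrierDeriv β c1 ρ * hGradSq d (hGauge d) x / ρ) * hLβ
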